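/- arXiv:1405.3237 — 5 statements merged into one kernel-verified Lean document; each statement's English description precedes it below -/
import Mathlib

section
/- Let G be a group satisfying (H1). Let H, K ∈ L(G) with K normal in H such that the quotient H/K is virtually nilpotent, i.e. there is a subgroup M with K ≤ M ≤ H, M of finite index in H, K normal in M, and M/K nilpotent. Then the centralizers coincide: C_G(K) = C_G(H). -/
variable {G : Type*} [Group G]

/-- The conjugate `B ^ g = g⁻¹ * B * g` of a subgroup `B` by an element `g`. -/
def conjBy (B : Subgroup G) (g : G) : Subgroup G :=
  B.map (MulAut.conj g⁻¹).toMonoidHom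

/-- A subgroup is virtually solvable if it has a solvable subgroup of finite index. -/
def VirtSolvable (H : Subgroup G) : Prop :=
  ∃ M : Subgroup G, M ≤ H ∧ M.relIndex H ≠ 0 ∧ IsSolvable ↥M

/-- A subgroup is virtually nilpotent if it has a nilpotent subgroup of finite index. -/
def VirtNilpotent (H : Subgroup G) : Prop :=
  ∃ M : Subgroup G, M ≤ H ∧ M.relIndex H ≠ 0 ∧ Group.IsNilpotent ↥M

/-- Hypothesis (H1): every virtually solvable subgroup whose normalizer has finite index
(i.e. belonging to `L(G)`) is trivial. -/
def HypH1 (G : Type*) [Group G] : Prop :=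
  ∀ H : Subgroup G, (Subgroup.normalizer (H : Set G)).FiniteIndex → VirtSolvable H → H = ⊥

/-- Hypothesis (H2): every nontrivial normal subgroup of `G` contains the derived subgroup
of some finite-index subgroup of `G`. -/
def HypH2 (G : Type*) [Group G] : Prop :=
  ∀ N : Subgroup G, N.Normal → N ≠ ⊥ →
    ∃ G₀ : Subgroup G, G₀.FiniteIndex ∧ ⁅G₀, G₀⁆ ≤ N

/-- `VA K H` means `K ≤va H`: `K ≤ H` and `K` contains the derived subgroup of some
finite-index subgroup of `H`. -/
def VA (K H : Subgroup G) : Prop :=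
  K ≤ H ∧ ∃ A : Subgroup G, A ≤ H ∧ A.relIndex H ≠ 0 ∧ ⁅A, A⁆ ≤ K

/-- A subgroup `B` is basal if its normalizer has finite index and every conjugate of `B`
either equals `B` or meets `B` trivially. -/
def IsBasal (B : Subgroup G) : Prop :=
  (Subgroup.normalizer (B : Set G)).FiniteIndex ∧ ∀ g : G, conjBy B g = B ∨ conjBy B g ⊓ B = ⊥

/-- The rigid normalizer `R(A)` of a basal subgroup `A`: the intersection of the
normalizers of all basal subgroups meeting `A` trivially. -/
def rigidNormalizer (A : Subgroup G) : Subgroup G :=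
  ⨅ B ∈ {B : Subgroup G | IsBasal B ∧ A ⊓ B = ⊥}, Subgroup.normalizer (B : Set G)

/-!
Write `C = C_G(K)`. Under (H1) a subgroup in `L(G)` has trivial center, so `C ∩ K = 1`; hence
`C ∩ M` embeds in the nilpotent group `M/K`, and `C ∩ H ∈ L(G)` is virtually solvable, hence
trivial. Since `H` normalizes `C`, the subgroups `H` and `C ∩ N`, where `N` is the normal core of
`N_G(H)`, normalize each other and meet trivially, so they commute.

It remains to show `C_G(C ∩ N) = C_G(C)` for `C ∈ L(G)` and `N` normal of finite index. Put
`D = C_G(C ∩ N)`. By (H1), `D ∩ C = 1`, so `D ∩ N_G(C)` centralizes `C` and `C_G(C)` has finite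
index in `D`. A commutator `[d, c]` with `d ∈ D`, `c ∈ C` only depends on the cosets
`d C_G(C)` and `c (C ∩ N)`, so there are finitely many of them; the subgroup `[D, C] ≤ D` they
generate then has a center of finite index, and (H1) makes it trivial.
-/

open Subgroup
open scoped Pointwise commutatorElement

theorem commutatorElement_mul_mul_of_commute {a b e w : G} (heb : Commute e b)
    (hew : Commute e w) (hwa : Commute w a) : ⁅a * e, b * w⁆ = ⁅a, b⁆ := by
  have h₁ : e * (b * w) = b * w * e := (heb.mul_right hew).eq
  have h₂ : w * a⁻¹ = a⁻¹ * w := hwa.inv_right.eq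
  calc ⁅a * e, b * w⁆ = a * (e * (b * w)) * e⁻¹ * a⁻¹ * w⁻¹ * b⁻¹ := by
        simp only [commutatorElement_def]; group
    _ = a * b * (w * a⁻¹) * w⁻¹ * b⁻¹ := by rw [h₁]; group
    _ = ⁅a, b⁆ := by rw [h₂, commutatorElement_def]; group

namespace Subgroup

theorem normalizer_le_normalizer_centralizer (X : Subgroup G) :
    normalizer (X : Set G) ≤ normalizer (centralizer (X : Set G) : Set G) := by
  refine le_normalizer_iff.mpr fun g hg c hc => mem_centralizer_iff.mpr fun x hx => ?_
  have hx' : g⁻¹ * x * g ∈ X := (mem_normalizer_iff''.mp hg x).mp hx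
  simpa [mul_assoc] using congr(g * $(mem_centralizer_iff.mp hc _ hx') * g⁻¹)

theorem normalizer_inf_normalizer_le_normalizer_commutator (A B : Subgroup G) :
    normalizer (A : Set G) ⊓ normalizer (B : Set G) ≤
      normalizer ((⁅A, B⁆ : Subgroup G) : Set G) := by
  intro g hg
  rw [mem_inf, mem_normalizer_iff_map_conj_eq, mem_normalizer_iff_map_conj_eq] at hg
  rw [mem_normalizer_iff_map_conj_eq, map_commutator, hg.1, hg.2]

theorem le_centralizer_of_le_normalizer_of_inf_eq_bot {A B : Subgroup G}
    (hAB : A ≤ normalizer (B : Set G)) (hBA : B ≤ normalizer (A : Set G)) (h : A ⊓ B = ⊥) :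
    A ≤ centralizer (B : Set G) := by
  rw [← commutator_eq_bot_iff_le_centralizer, eq_bot_iff, ← h]
  exact le_inf (le_normalizer_iff_commutator_le_left.mp hBA)
    (le_normalizer_iff_commutator_le_right.mp hAB)

theorem relIndex_centralizer_singleton_ne_zero {T : Subgroup G} {g : G} {P : Set G}
    (hP : P.Finite) (hT : ∀ t ∈ T, t * g * t⁻¹ ∈ P) :
    (centralizer {g}).relIndex T ≠ 0 := by
  have : Finite P := hP.to_subtype
  have : Finite (T ⧸ (centralizer {g}).subgroupOf T) := by
    refine Finite.of_injective
      (fun q : T ⧸ _ => (⟨(q.out : G) * g * (q.out : G)⁻¹, hT _ q.out.2⟩ : P)) fun q₁ q₂ hq => ?_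
    rw [← q₁.out_eq', ← q₂.out_eq', QuotientGroup.eq, mem_subgroupOf,
      mem_centralizer_singleton_iff]
    set a : G := ((q₁.out : T) : G)
    set b : G := ((q₂.out : T) : G)
    have hab : a * g * a⁻¹ = b * g * b⁻¹ := congrArg Subtype.val hq
    calc ((q₁.out⁻¹ * q₂.out : T) : G) * g = a⁻¹ * (b * g * b⁻¹) * b := by simp [a, b, mul_assoc]
      _ = g * (a⁻¹ * b) := by rw [← hab]; group
  exact index_ne_zero_of_finite

theorem relIndex_centralizer_closure_ne_zero {S P : Set G} (hS : S.Finite) (hP : P.Finite)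
    (hSP : ∀ s ∈ S, ∀ t ∈ closure S, t * s * t⁻¹ ∈ P) :
    (centralizer (closure S : Set G)).relIndex (closure S) ≠ 0 := by
  have : Finite S := hS.to_subtype
  rw [centralizer_closure, centralizer_eq_iInf, iInf_subtype']
  exact relIndex_iInf_ne_zero fun s => relIndex_centralizer_singleton_ne_zero hP (hSP s s.2)

def commutatorElements (A B : Subgroup G) : Set G :=
  {g | ∃ a ∈ A, ∃ b ∈ B, ⁅a, b⁆ = g}

theorem closure_commutatorElements (A B : Subgroup G) :
    closure (commutatorElements A B) = ⁅A, B⁆ :=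
  rfl

theorem finite_commutatorElements_of_relIndex_centralizer_ne_zero {A B : Subgroup G}
    (hA : (centralizer (B : Set G)).relIndex A ≠ 0)
    (hB : (centralizer (A : Set G)).relIndex B ≠ 0) :
    (commutatorElements A B).Finite := by
  have : Finite (A ⧸ (centralizer (B : Set G)).subgroupOf A) := Nat.finite_of_card_ne_zero hA
  have : Finite (B ⧸ (centralizer (A : Set G)).subgroupOf B) := Nat.finite_of_card_ne_zero hB
  refine (Set.finite_range fun p : (A ⧸ (centralizer (B : Set G)).subgroupOf A) ×
      (B ⧸ (centralizer (A : Set G)).subgroupOf B) => ⁅(p.1.out : G), (p.2.out : G)⁆).subset ?_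
  rintro _ ⟨a, ha, b, hb, rfl⟩
  obtain ⟨e, he⟩ := QuotientGroup.mk_out_eq_mul ((centralizer (B : Set G)).subgroupOf A) ⟨a, ha⟩
  obtain ⟨w, hw⟩ := QuotientGroup.mk_out_eq_mul ((centralizer (A : Set G)).subgroupOf B) ⟨b, hb⟩
  have heB : (e : G) ∈ centralizer (B : Set G) := mem_subgroupOf.mp e.2
  have hwA : (w : G) ∈ centralizer (A : Set G) := mem_subgroupOf.mp w.2
  refine ⟨((⟨a, ha⟩ : A), (⟨b, hb⟩ : B)), ?_⟩
  simp only [he, hw, coe_mul]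
  exact commutatorElement_mul_mul_of_commute (mem_centralizer_iff.mp heB b hb).symm
    (mem_centralizer_iff.mp heB _ (w : B).2).symm (mem_centralizer_iff.mp hwA a ha).symm

theorem conj_commutatorElement_mem_mul_inv {A B : Subgroup G} {a φ x : G} (ha : a ∈ A)
    (hφ : φ ∈ A) (hx : x ∈ B) :
    a * ⁅φ, x⁆ * a⁻¹ ∈ commutatorElements A B * (commutatorElements A B)⁻¹ := by
  refine ⟨_, ⟨a * φ, mul_mem ha hφ, x, hx, rfl⟩, ⁅a, x⁆⁻¹, ⟨a, ha, x, hx, (inv_inv _).symm⟩, ?_⟩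
  rw [commutatorElement_mul_left_eq_conj_mul]
  group

end Subgroup

theorem virtSolvable_of_relIndex_centralizer_ne_zero {X : Subgroup G}
    (h : (centralizer (X : Set G)).relIndex X ≠ 0) : VirtSolvable X :=
  ⟨X ⊓ centralizer X, inf_le_left, by rwa [inf_relIndex_left],
    Group.isSolvable_of_comm fun a b => Subtype.ext (mem_centralizer_iff.mp b.2.2 _ a.2.1)⟩

/-- `⁅A, B⁆` is even center-by-finite: each of its finitely many generators has finitely many
conjugates. -/
theorem virtSolvable_commutator_of_finite_commutatorElements {A B : Subgroup G}
    (hle : ⁅A, B⁆ ≤ A) (hS : (commutatorElements A B).Finite) : VirtSolvable ⁅A, B⁆ := by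
  rw [← closure_commutatorElements] at hle ⊢
  refine virtSolvable_of_relIndex_centralizer_ne_zero
    (relIndex_centralizer_closure_ne_zero hS (hS.mul hS.inv) ?_)
  rintro _ ⟨φ, hφ, x, hx, rfl⟩ t ht
  exact conj_commutatorElement_mem_mul_inv (hle ht) hφ hx

theorem isSolvable_of_le_of_inf_eq_bot {K M X : Subgroup G} [(K.subgroupOf M).Normal]
    [Group.IsSolvable (M ⧸ K.subgroupOf M)] (hXM : X ≤ M) (hXK : X ⊓ K = ⊥) :
    Group.IsSolvable X := by
  refine Group.isSolvable_of_isSolvable_injective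
    (f := (QuotientGroup.mk' (K.subgroupOf M)).comp (inclusion hXM))
    ((injective_iff_map_eq_one _).mpr fun x hx => ?_)
  rw [MonoidHom.comp_apply, QuotientGroup.mk'_apply, QuotientGroup.eq_one_iff,
    mem_subgroupOf, coe_inclusion] at hx
  have : (x : G) ∈ X ⊓ K := ⟨x.2, hx⟩
  rw [hXK, mem_bot] at this
  exact Subtype.ext this

namespace HypH1

theorem eq_bot_of_le_normalizer (hH1 : HypH1 G) {X N : Subgroup G} [N.FiniteIndex]
    (hN : N ≤ normalizer (X : Set G)) (hX : VirtSolvable X) : X = ⊥ :=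
  hH1 X (finiteIndex_of_le hN) hX

theorem inf_centralizer_eq_bot (hH1 : HypH1 G) {X : Subgroup G}
    (hX : (normalizer (X : Set G)).FiniteIndex) : X ⊓ centralizer X = ⊥ := by
  refine hH1.eq_bot_of_le_normalizer
    ((le_inf le_rfl (normalizer_le_normalizer_centralizer X)).trans
      inf_normalizer_le_normalizer_inf)
    (virtSolvable_of_relIndex_centralizer_ne_zero ?_)
  have hab : X ⊓ centralizer X ≤ centralizer ((X ⊓ centralizer X : Subgroup G) : Set G) :=
    fun a ha => mem_centralizer_iff.mpr fun b hb => mem_centralizer_iff.mp ha.2 b hb.1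
  rw [relIndex_eq_one.mpr hab]
  exact one_ne_zero

theorem centralizer_inf_normal_eq (hH1 : HypH1 G) {C N : Subgroup G}
    (hC : (normalizer (C : Set G)).FiniteIndex) [N.Normal] [N.FiniteIndex] :
    centralizer ((C ⊓ N : Subgroup G) : Set G) = centralizer (C : Set G) := by
  set W := C ⊓ N
  set D := centralizer (W : Set G)
  set P := normalizer (C : Set G)
  have hPW : P ≤ normalizer (W : Set G) :=
    (le_inf le_rfl le_normalizer_of_normal).trans inf_normalizer_le_normalizer_inf
  have hPD : P ≤ normalizer (D : Set G) := hPW.trans (normalizer_le_normalizer_centralizer W)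
  have hCD : C ≤ normalizer (D : Set G) := le_normalizer.trans hPD
  have hWC : W.relIndex C ≠ 0 := by
    rw [inf_relIndex_left]
    exact (isFiniteRelIndex_of_finiteIndex (K := C)).relIndex_ne_zero
  have hWD : W ⊓ D = ⊥ := hH1.inf_centralizer_eq_bot (finiteIndex_of_le hPW)
  have hDC : D ⊓ C = ⊥ := by
    refine hH1.eq_bot_of_le_normalizer
      ((le_inf hPD le_rfl).trans inf_normalizer_le_normalizer_inf)
      ⟨⊥, bot_le, ?_, inferInstanceAs (Group.IsSolvable (⊥ : Subgroup G))⟩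
    -- `D ⊓ C` is finite, since it meets `W` trivially
    have : W ⊓ (D ⊓ C) = ⊥ := eq_bot_iff.mpr ((inf_le_inf_left W inf_le_left).trans hWD.le)
    rw [← this, inf_relIndex_right]
    exact mt (relIndex_eq_zero_of_le_right inf_le_right) hWC
  have hDP : D ⊓ P ≤ centralizer (C : Set G) :=
    le_centralizer_of_le_normalizer_of_inf_eq_bot inf_le_right
      ((le_inf hCD (le_normalizer.trans le_normalizer)).trans inf_normalizer_le_normalizer_inf)
      (eq_bot_iff.mpr ((inf_le_inf_right C inf_le_left).trans hDC.le))
  have hCcD : (centralizer (C : Set G)).relIndex D ≠ 0 := by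
    refine mt (relIndex_eq_zero_of_le_left hDP) ?_
    rw [inf_relIndex_left]
    exact (isFiniteRelIndex_of_finiteIndex (K := D)).relIndex_ne_zero
  have hDcC : (centralizer (D : Set G)).relIndex C ≠ 0 :=
    mt (relIndex_eq_zero_of_le_left (le_centralizer_iff.mp le_rfl)) hWC
  have hDC_comm : ⁅D, C⁆ = ⊥ :=
    hH1.eq_bot_of_le_normalizer
      ((le_inf hPD le_rfl).trans (normalizer_inf_normalizer_le_normalizer_commutator D C))
      (virtSolvable_commutator_of_finite_commutatorElements
        (le_normalizer_iff_commutator_le_left.mp hCD)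
        (finite_commutatorElements_of_relIndex_centralizer_ne_zero hCcD hDcC))
  exact le_antisymm (commutator_eq_bot_iff_le_centralizer.mp hDC_comm) (centralizer_le inf_le_left)

end HypH1

theorem statement1_general (hH1 : HypH1 G) (H K : Subgroup G)
    (hHL : (Subgroup.normalizer (H : Set G)).FiniteIndex) (hKL : (Subgroup.normalizer (K : Set G)).FiniteIndex)
    (hKH : K ≤ H) (hKnorm : (K.subgroupOf H).Normal)
    (M : Subgroup G) (hMH : M ≤ H) (hMfin : M.relIndex H ≠ 0)
    [hnormM : (K.subgroupOf M).Normal]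
    (hnilp : Group.IsNilpotent (↥M ⧸ K.subgroupOf M)) :
    Subgroup.centralizer (K : Set G) = Subgroup.centralizer (H : Set G) := by
  have := hKL; have := hHL
  set C := centralizer (K : Set G)
  have hKC : normalizer (K : Set G) ≤ normalizer (C : Set G) :=
    normalizer_le_normalizer_centralizer K
  have hHC : H ≤ normalizer (C : Set G) :=
    ((normal_subgroupOf_iff_le_normalizer hKH).mp hKnorm).trans hKC
  have hCK : C ⊓ K = ⊥ := inf_comm K C ▸ hH1.inf_centralizer_eq_bot hKL
  have hCH : C ⊓ H = ⊥ := by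
    have hCM : (C ⊓ M).relIndex (C ⊓ H) ≠ 0 := by
      have hC : C.relIndex (C ⊓ H) ≠ 0 := by rw [relIndex_eq_one.mpr inf_le_left]; exact one_ne_zero
      exact relIndex_inf_ne_zero hC (mt (relIndex_eq_zero_of_le_right inf_le_right) hMfin)
    exact hH1.eq_bot_of_le_normalizer (N := normalizer (K : Set G) ⊓ normalizer (H : Set G))
      ((inf_le_inf_right _ hKC).trans inf_normalizer_le_normalizer_inf)
      ⟨C ⊓ M, inf_le_inf_left C hMH, hCM, isSolvable_of_le_of_inf_eq_bot inf_le_right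
        (eq_bot_iff.mpr ((inf_le_inf_right K inf_le_left).trans hCK.le))⟩
  set N := (normalizer (H : Set G)).normalCore
  have hCN : C ⊓ N ≤ centralizer (H : Set G) :=
    le_centralizer_of_le_normalizer_of_inf_eq_bot (inf_le_right.trans (normalCore_le _))
      ((le_inf hHC le_normalizer_of_normal).trans inf_normalizer_le_normalizer_inf)
      (eq_bot_iff.mpr ((inf_le_inf_right H inf_le_left).trans hCH.le))
  have hHcC : H ≤ centralizer (C : Set G) :=
    hH1.centralizer_inf_normal_eq (N := N) (finiteIndex_of_le hKC) ▸ le_centralizer_iff.mp hCN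
  exact le_antisymm (le_centralizer_iff.mp hHcC) (centralizer_le hKH)

theorem statement1 (hH1 : HypH1 G) (H K : Subgroup G)
    (hHL : (Subgroup.normalizer (H : Set G)).FiniteIndex) (hKL : (Subgroup.normalizer (K : Set G)).FiniteIndex)
    (hKH : K ≤ H) (hKnorm : (K.subgroupOf H).Normal)
    (M : Subgroup G) (hKM : K ≤ M) (hMH : M ≤ H) (hMfin : M.relIndex H ≠ 0)
    [hnormM : (K.subgroupOf M).Normal]
    (hnilp : Group.IsNilpotent (↥M ⧸ K.subgroupOf M)) :
    Subgroup.centralizer (K : Set G) = Subgroup.centralizer (H : Set G) :=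
  statement1_general hH1 H K hHL hKL hKH hKnorm M hMH hMfin (hnormM := hnormM) hnilp
end

section
/- Let G be a group and let B₁, B₂ be basal subgroups of G. Then B₁ ∩ B₂ is a basal subgroup of G. -/
variable {G : Type*} [Group G]

lemma conjBy_inf (B₁ B₂ : Subgroup G) (g : G) :
    conjBy (B₁ ⊓ B₂) g = conjBy B₁ g ⊓ conjBy B₂ g :=
  Subgroup.map_inf B₁ B₂ _ (MulAut.conj g⁻¹).injective

theorem statement9 (B₁ B₂ : Subgroup G) (h₁ : IsBasal B₁) (h₂ : IsBasal B₂) :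
    IsBasal (B₁ ⊓ B₂) := by
  obtain ⟨_, hconj₁⟩ := h₁
  obtain ⟨_, hconj₂⟩ := h₂
  refine ⟨Subgroup.finiteIndex_of_le Subgroup.inf_normalizer_le_normalizer_inf, fun g ↦ ?_⟩
  rw [conjBy_inf]
  rcases hconj₁ g with eq₁ | disj₁
  · rcases hconj₂ g with eq₂ | disj₂
    · exact .inl (by rw [eq₁, eq₂])
    · exact .inr (eq_bot_mono (inf_le_inf inf_le_right inf_le_right) disj₂)
  · exact .inr (eq_bot_mono (inf_le_inf inf_le_left inf_le_left) disj₁)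
end

section
/- Let G be a group satisfying (H1) and let A be a basal subgroup of G. Then A ≤ R(A) ≤ N_G(A), where R(A) is the rigid normalizer of A. -/
variable {G : Type*} [Group G]

/-!
Let `a ∈ A` and let `B` be basal with `A ⊓ B = ⊥`. If `a` did not normalize `B`, then
`B ^ a ⊓ B = ⊥`. Take a normal subgroup `N` of finite index normalizing `A` and `B`, hence also
`B ^ a`. Two subgroups that meet trivially and normalize each other commute elementwise, so for
`v, w ∈ N ⊓ B` the element `w` commutes with `a⁻¹ v a ∈ B ^ a` and with `v⁻¹ a⁻¹ v a ∈ A`, hence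
with `v`. Thus `B ∈ L(G)` is virtually abelian, and (H1) gives `B = ⊥`, which every element
normalizes.

Conversely, if `x ∈ R(A)` does not normalize `A`, then `A ^ x` is basal and meets `A` trivially,
so `x` normalizes `A ^ x`, which happens only if `x` normalizes `A`.
-/

open Subgroup
open scoped commutatorElement

section Conjugation

variable {A B N : Subgroup G} {g h x : G}

lemma mem_conjBy : x ∈ conjBy B g ↔ g * x * g⁻¹ ∈ B := by
  simp only [conjBy, mem_map_equiv, MulAut.conj_symm_apply, inv_inv]

lemma mem_conjBy_self : x ∈ conjBy B x ↔ x ∈ B := by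
  simp [mem_conjBy]

lemma conjBy_conjBy : conjBy (conjBy B g) h = conjBy B (g * h) := by
  ext x
  simp only [mem_conjBy, mul_inv_rev, mul_assoc]

lemma conjBy_bot : conjBy (⊥ : Subgroup G) g = ⊥ :=
  map_bot _

lemma conjBy_inf_s12 : conjBy (A ⊓ B) g = conjBy A g ⊓ conjBy B g :=
  map_inf _ _ _ (MulEquiv.injective _)

lemma conjBy_eq_self_iff : conjBy B g = B ↔ g ∈ normalizer (B : Set G) := by
  simp only [SetLike.ext_iff, mem_conjBy, mem_normalizer_iff]
  exact forall_congr' fun _ => Iff.comm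

lemma normalizer_conjBy : normalizer (conjBy B g : Set G) = conjBy (normalizer (B : Set G)) g :=
  (map_equiv_normalizer_eq B _).symm

lemma index_conjBy : (conjBy B g).index = B.index :=
  index_map_of_bijective (MulEquiv.bijective _) B

lemma le_normalizer_conjBy [hN : N.Normal] (hNB : N ≤ normalizer (B : Set G)) :
    N ≤ normalizer (conjBy B g : Set G) := by
  rw [normalizer_conjBy]
  exact fun x hx => mem_conjBy.mpr (hNB (hN.conj_mem x hx g))

lemma isBasal_conjBy (hB : IsBasal B) (x : G) : IsBasal (conjBy B x) := by
  refine ⟨⟨by rw [normalizer_conjBy, index_conjBy]; exact hB.1.index_ne_zero⟩, fun g => ?_⟩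
  have hg : conjBy (conjBy B x) g = conjBy (conjBy B (x * g * x⁻¹)) x := by
    simp only [conjBy_conjBy, inv_mul_cancel_right]
  rcases hB.2 (x * g * x⁻¹) with h | h
  · exact Or.inl (by rw [hg, h])
  · exact Or.inr (by rw [hg, ← conjBy_inf_s12, h, conjBy_bot])

end Conjugation

lemma commute_of_inf_eq_bot {P Q : Subgroup G} (hPQ : P ⊓ Q = ⊥) {x y : G} (hx : x ∈ P)
    (hy : y ∈ Q) (hxQ : x ∈ normalizer (Q : Set G)) (hyP : y ∈ normalizer (P : Set G)) :
    Commute x y := by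
  have hP : ⁅x, y⁆ ∈ P := by
    have := (mem_normalizer_iff.mp hyP x⁻¹).mp (P.inv_mem hx)
    simpa only [commutatorElement_def, mul_assoc] using P.mul_mem hx this
  have hQ : ⁅x, y⁆ ∈ Q := Q.mul_mem ((mem_normalizer_iff.mp hxQ y).mp hy) (Q.inv_mem hy)
  rw [← commutatorElement_eq_one_iff_commute, ← mem_bot, ← hPQ]
  exact ⟨hP, hQ⟩

lemma virtSolvable_of_commute {N B : Subgroup G} [N.FiniteIndex]
    (h : ∀ v ∈ N ⊓ B, ∀ w ∈ N ⊓ B, Commute v w) : VirtSolvable B :=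
  ⟨N ⊓ B, inf_le_right,
    by rw [inf_relIndex_right]; exact isFiniteRelIndex_of_finiteIndex.relIndex_ne_zero,
    Group.isSolvable_of_comm fun v w => Subtype.ext (h v v.2 w w.2)⟩

lemma commute_of_conjBy_inf_eq_bot {A B N : Subgroup G} [hN : N.Normal]
    (hNA : N ≤ normalizer (A : Set G)) (hNB : N ≤ normalizer (B : Set G)) (hAB : A ⊓ B = ⊥)
    {a : G} (ha : a ∈ A) (hBa : conjBy B a ⊓ B = ⊥) {v w : G} (hv : v ∈ N ⊓ B)
    (hw : w ∈ N ⊓ B) : Commute v w := by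
  set y := a⁻¹ * v * a
  have hyN : y ∈ N := by simpa using hN.conj_mem v hv.1 a⁻¹
  have hyBa : y ∈ conjBy B a := mem_conjBy.mpr (by simpa [y, mul_assoc] using hv.2)
  set c := v⁻¹ * y
  have hcA : c ∈ A := by
    have := (mem_normalizer_iff.mp (hNA (N.inv_mem hv.1)) a⁻¹).mp (A.inv_mem ha)
    simpa [c, y, mul_assoc] using A.mul_mem this ha
  have hcN : c ∈ N := N.mul_mem (N.inv_mem hv.1) hyN
  have hwy : Commute w y :=
    commute_of_inf_eq_bot (inf_comm B _ ▸ hBa) hw.2 hyBa (le_normalizer_conjBy hNB hw.1) (hNB hyN)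
  have hwc : Commute w c := (commute_of_inf_eq_bot hAB hcA hw.2 (hNB hcN) (hNA hw.1)).symm
  have hv_eq : v = y * c⁻¹ := by simp [c]
  exact hv_eq ▸ (hwy.mul_right hwc.inv_right).symm

lemma conjBy_eq_self_of_inf_eq_bot (hH1 : HypH1 G) {A B : Subgroup G}
    [(normalizer (A : Set G)).FiniteIndex] (hB : IsBasal B) (hAB : A ⊓ B = ⊥) {a : G}
    (ha : a ∈ A) : conjBy B a = B := by
  rcases hB.2 a with h | hBa
  · exact h
  have := hB.1
  let N := (normalizer (A : Set G) ⊓ normalizer (B : Set G)).normalCore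
  have hNA : N ≤ normalizer (A : Set G) := (normalCore_le _).trans inf_le_left
  have hNB : N ≤ normalizer (B : Set G) := (normalCore_le _).trans inf_le_right
  have hB_bot : B = ⊥ := hH1 B hB.1 <| virtSolvable_of_commute (N := N) fun v hv w hw =>
    commute_of_conjBy_inf_eq_bot hNA hNB hAB ha hBa hv hw
  rw [hB_bot, conjBy_bot]

lemma mem_rigidNormalizer_iff {A : Subgroup G} {x : G} :
    x ∈ rigidNormalizer A ↔
      ∀ B : Subgroup G, IsBasal B → A ⊓ B = ⊥ → x ∈ normalizer (B : Set G) := by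
  simp [rigidNormalizer, mem_iInf]

lemma le_rigidNormalizer (hH1 : HypH1 G) {A : Subgroup G}
    [(normalizer (A : Set G)).FiniteIndex] : A ≤ rigidNormalizer A := fun _ ha =>
  mem_rigidNormalizer_iff.mpr fun _ hB hAB =>
    conjBy_eq_self_iff.mp (conjBy_eq_self_of_inf_eq_bot hH1 hB hAB ha)

lemma IsBasal.rigidNormalizer_le_normalizer {A : Subgroup G} (hA : IsBasal A) :
    rigidNormalizer A ≤ normalizer (A : Set G) := by
  intro x hx
  rcases hA.2 x with h | h
  · exact conjBy_eq_self_iff.mp h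
  · have := mem_rigidNormalizer_iff.mp hx _ (isBasal_conjBy hA x) (inf_comm A _ ▸ h)
    rwa [normalizer_conjBy, mem_conjBy_self] at this

theorem statement12 (hH1 : HypH1 G) (A : Subgroup G) (hA : IsBasal A) :
    A ≤ rigidNormalizer A ∧ rigidNormalizer A ≤ Subgroup.normalizer (A : Set G) := by
  have := hA.1
  exact ⟨le_rigidNormalizer hH1, hA.rigidNormalizer_le_normalizer⟩
end

section
/- Let G be a group satisfying (H1) and let A₁, A₂ be basal subgroups of G such that A₁ ∩ A₂ ≤va A₁ (i.e. there is a finite-index subgroup K of A₁ with [K, K] ≤ A₁ ∩ A₂; this says [A₁] ≤ [A₂] in the structure lattice). Then R(A₁) ≤ R(A₂). -/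
variable {G : Type*} [Group G]

/-! If `B` is basal with `A₂ ∩ B = 1`, then `K ∩ B` has commutator subgroup inside
`A₂ ∩ B = 1`, so `A₁ ∩ B` is virtually abelian. Its normalizer contains `N(A₁) ∩ N(B)` and
so has finite index, hence `A₁ ∩ B = 1` by (H1). So every normalizer intersected in `R(A₂)`
is also intersected in `R(A₁)`. -/

open Subgroup

theorem isSolvable_of_commutator_eq_bot {M : Subgroup G} (h : ⁅M, M⁆ = ⊥) :
    Group.IsSolvable M :=
  Group.isSolvable_of_comm fun x y =>
    Subtype.ext <| (commutator_eq_bot_iff_le_centralizer.mp h y.2) x x.2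

theorem commutator_eq_bot_of_le_of_le {M K C B : Subgroup G} (hMK : M ≤ K) (hMB : M ≤ B)
    (hKC : ⁅K, K⁆ ≤ C) (hCB : C ⊓ B = ⊥) : ⁅M, M⁆ = ⊥ :=
  eq_bot_iff.mpr <| hCB ▸ le_inf ((commutator_mono hMK hMK).trans hKC)
    ((commutator_mono hMB hMB).trans (le_normalizer_iff_commutator_le_right.mp B.le_normalizer))

theorem virtSolvable_inf_of_commutator_le {A B K C : Subgroup G} (hK : K.relIndex A ≠ 0)
    (hKC : ⁅K, K⁆ ≤ C) (hCB : C ⊓ B = ⊥) : VirtSolvable (A ⊓ B) := by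
  refine ⟨K ⊓ (A ⊓ B), inf_le_right, ?_, ?_⟩
  · rw [inf_relIndex_right]
    exact fun h0 => hK (relIndex_eq_zero_of_le_right inf_le_left h0)
  · exact isSolvable_of_commutator_eq_bot <|
      commutator_eq_bot_of_le_of_le inf_le_left (inf_le_right.trans inf_le_right) hKC hCB

theorem finiteIndex_normalizer_inf {A B : Subgroup G} [(normalizer (A : Set G)).FiniteIndex]
    [(normalizer (B : Set G)).FiniteIndex] :
    (normalizer ((A ⊓ B : Subgroup G) : Set G)).FiniteIndex :=
  finiteIndex_of_le inf_normalizer_le_normalizer_inf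

theorem inf_eq_bot_of_hypH1 (hH1 : HypH1 G) {A B K C : Subgroup G}
    (hA : (normalizer (A : Set G)).FiniteIndex) (hB : (normalizer (B : Set G)).FiniteIndex)
    (hK : K.relIndex A ≠ 0) (hKC : ⁅K, K⁆ ≤ C) (hCB : C ⊓ B = ⊥) : A ⊓ B = ⊥ :=
  hH1 _ finiteIndex_normalizer_inf (virtSolvable_inf_of_commutator_le hK hKC hCB)

theorem rigidNormalizer_le_rigidNormalizer {A₁ A₂ : Subgroup G}
    (h : ∀ B : Subgroup G, IsBasal B → A₂ ⊓ B = ⊥ → A₁ ⊓ B = ⊥) :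
    rigidNormalizer A₁ ≤ rigidNormalizer A₂ :=
  le_iInf₂ fun B ⟨hB, hA₂B⟩ => iInf₂_le B ⟨hB, h B hB hA₂B⟩

theorem statement13_general (hH1 : HypH1 G) (A₁ A₂ : Subgroup G)
    (h₁ : IsBasal A₁)
    (K : Subgroup G) (hKfin : K.relIndex A₁ ≠ 0)
    (hKc : ⁅K, K⁆ ≤ A₁ ⊓ A₂) :
    rigidNormalizer A₁ ≤ rigidNormalizer A₂ :=
  rigidNormalizer_le_rigidNormalizer fun _ hB hA₂B =>
    inf_eq_bot_of_hypH1 hH1 h₁.1 hB.1 hKfin (hKc.trans inf_le_right) hA₂B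

theorem statement13 (hH1 : HypH1 G) (A₁ A₂ : Subgroup G)
    (h₁ : IsBasal A₁) (h₂ : IsBasal A₂)
    (K : Subgroup G) (hK : K ≤ A₁) (hKfin : K.relIndex A₁ ≠ 0)
    (hKc : ⁅K, K⁆ ≤ A₁ ⊓ A₂) :
    rigidNormalizer A₁ ≤ rigidNormalizer A₂ :=
  statement13_general hH1 A₁ A₂ h₁ K hKfin hKc
end

section
/- Let G be a group, B a subgroup of G, N a subgroup of the normalizer N_G(B), g an element of B, and V a subgroup of G such that every element of the conjugate V^g = g⁻¹Vg commutes with every element of V. Then the commutator subgroup [V ∩ N, V ∩ N] is contained in B. (This is the key computation showing that every nontrivial subgroup with finitely many conjugates in a branch group contains (rst(v) ∩ N)' for some vertex v.) -/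
variable {G : Type*} [Group G]

open scoped commutatorElement

section

variable {B : Subgroup G} {b x y c : G}

theorem conj_mem_conjBy {V : Subgroup G} (g : G) (hx : x ∈ V) : g⁻¹ * x * g ∈ conjBy V g :=
  ⟨x, hx, by simp⟩

theorem commutatorElement_mem_of_mem_of_mem_normalizer (hb : b ∈ B)
    (hy : y ∈ Subgroup.normalizer (B : Set G)) : ⁅b, y⁆ ∈ B := by
  rw [commutatorElement_def, mul_assoc b, mul_assoc b]
  exact mul_mem hb ((Subgroup.mem_normalizer_iff.mp hy b⁻¹).mp (inv_mem hb))

theorem commutatorElement_mem_of_mem_normalizer_of_mem (hx : x ∈ Subgroup.normalizer (B : Set G))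
    (hb : b ∈ B) : ⁅x, b⁆ ∈ B := by
  rw [← commutatorElement_inv]
  exact inv_mem (commutatorElement_mem_of_mem_of_mem_normalizer hb hx)

/-- Writing `x = (x * c⁻¹) * c`, the commutator `⁅x, y⁆` collapses to `⁅x * c⁻¹, y⁆`. -/
theorem commutatorElement_mem_of_mul_inv_mem_of_commute (hy : y ∈ Subgroup.normalizer (B : Set G))
    (hxc : x * c⁻¹ ∈ B) (hcy : Commute c y) : ⁅x, y⁆ ∈ B := by
  have hx : x = x * c⁻¹ * c := (inv_mul_cancel_right x c).symm
  rw [hx, commutatorElement_mul_left_eq_conj_mul, commutatorElement_eq_one_iff_commute.mpr hcy,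
    mul_one, mul_inv_cancel, one_mul]
  exact commutatorElement_mem_of_mem_of_mem_normalizer hxc hy

end

theorem statement16 (B N V : Subgroup G) (hN : N ≤ Subgroup.normalizer (B : Set G)) (g : G) (hg : g ∈ B)
    (hcomm : ∀ x ∈ conjBy V g, ∀ y ∈ V, Commute x y) :
    ⁅V ⊓ N, V ⊓ N⁆ ≤ B := by
  rw [Subgroup.commutator_le]
  rintro x ⟨hxV, hxN⟩ y ⟨hyV, hyN⟩
  have hx_conj : x * (g⁻¹ * x * g)⁻¹ = ⁅x, g⁻¹⁆ := by group
  have hx_mod_B : x * (g⁻¹ * x * g)⁻¹ ∈ B :=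
    hx_conj ▸ commutatorElement_mem_of_mem_normalizer_of_mem (hN hxN) (inv_mem hg)
  exact commutatorElement_mem_of_mul_inv_mem_of_commute (hN hyN) hx_mod_B
    (hcomm _ (conj_mem_conjBy g hxV) y hyV)
end
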